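/- For every τ > 0 and every x ∈ ℝ, the Gaussian scale mixture identity for the Laplacian holds: ∫₀^∞ (2πs)^{−1/2} exp(−x²/(2s)) · (τ²/2) exp(−τ² s / 2) ds = (τ/2) exp(−τ|x|). -/

import Mathlib

/-!
Substituting `s = t ^ 2` and completing the square,
`x ^ 2 / (2 t ^ 2) + τ ^ 2 t ^ 2 / 2 = τ |x| + (τ t - |x| / t) ^ 2 / 2`,
turns the mixture integral into `e^{-τ|x|}` times a Gaussian integral of `τ t - |x| / t` over
`(0, ∞)`. By the Cauchy–Schlömilch substitution `u = t - a / t`, whose inverse has derivative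
`1/2` plus an odd function of `u`, such an integral of an even integrable `f` equals that of `f`
itself, which leaves the half-line Gaussian integral `√(2π) / 2`.
-/

open MeasureTheory Real

open Set

theorem integral_eq_zero_of_odd {f : ℝ → ℝ} (hf : ∀ x, f (-x) = -f x) : ∫ x, f x = 0 := by
  have h := integral_neg_eq_self f volume
  simp_rw [hf, integral_neg] at h
  exact neg_eq_self.mp h

/-- The positive root of `t ^ 2 - u * t - a = 0`: for `0 < a` it inverts `t ↦ t - a / t`
on `(0, ∞)`. -/
noncomputable def subDivInv (a u : ℝ) : ℝ := (u + √(u ^ 2 + 4 * a)) / 2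

section SubDivInv

variable {a : ℝ}

theorem abs_lt_sqrt_sq_add_four_mul (ha : 0 < a) (u : ℝ) : |u| < √(u ^ 2 + 4 * a) := by
  rw [← sqrt_sq_eq_abs]
  exact sqrt_lt_sqrt (sq_nonneg u) (by linarith)

theorem subDivInv_pos (ha : 0 < a) (u : ℝ) : 0 < subDivInv a u := by
  have := abs_lt_sqrt_sq_add_four_mul ha u
  have := neg_abs_le u
  unfold subDivInv
  linarith

theorem subDivInv_sub_div (ha : 0 < a) (u : ℝ) : subDivInv a u - a / subDivInv a u = u := by
  have hsq := sq_sqrt (by positivity : 0 ≤ u ^ 2 + 4 * a)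
  have hne := (subDivInv_pos ha u).ne'
  field_simp
  unfold subDivInv
  linear_combination hsq / 4

theorem subDivInv_sub_div_self (ha : 0 < a) {t : ℝ} (ht : 0 < t) :
    subDivInv a (t - a / t) = t := by
  have hsq : (t - a / t) ^ 2 + 4 * a = (t + a / t) ^ 2 := by
    field_simp
    ring
  rw [subDivInv, hsq, sqrt_sq (by positivity)]
  ring

theorem image_subDivInv_univ (ha : 0 < a) : subDivInv a '' univ = Ioi 0 := by
  refine (image_subset_iff.mpr fun u _ ↦ subDivInv_pos ha u).antisymm fun t ht ↦ ?_
  exact ⟨t - a / t, mem_univ _, subDivInv_sub_div_self ha ht⟩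

theorem one_add_div_sqrt_pos (ha : 0 < a) (u : ℝ) : 0 < 1 + u / √(u ^ 2 + 4 * a) := by
  have hr := abs_lt_sqrt_sq_add_four_mul ha u
  have : -1 < u / √(u ^ 2 + 4 * a) := by
    rw [lt_div_iff₀ ((abs_nonneg u).trans_lt hr)]
    linarith [neg_abs_le u]
  linarith

theorem hasDerivAt_subDivInv (ha : 0 < a) (u : ℝ) :
    HasDerivAt (subDivInv a) ((1 + u / √(u ^ 2 + 4 * a)) / 2) u := by
  have hpos : 0 < u ^ 2 + 4 * a := by positivity
  have hsq : HasDerivAt (fun u ↦ u ^ 2 + 4 * a) (2 * u) u := by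
    simpa using (hasDerivAt_pow 2 u).add_const (4 * a)
  refine (((hasDerivAt_id' u).add (hsq.sqrt hpos.ne')).div_const 2).congr_deriv ?_
  field_simp

theorem strictMono_subDivInv (ha : 0 < a) : StrictMono (subDivInv a) :=
  strictMono_of_hasDerivAt_pos (hasDerivAt_subDivInv ha)
    fun u ↦ half_pos (one_add_div_sqrt_pos ha u)

end SubDivInv

theorem integral_Ioi_comp_sub_div {f : ℝ → ℝ} (hf : Integrable f) (heven : ∀ u, f (-u) = f u)
    {a : ℝ} (ha : 0 ≤ a) : ∫ t in Ioi 0, f (t - a / t) = ∫ t in Ioi 0, f t := by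
  rcases ha.eq_or_lt with rfl | ha
  · simp
  set r := fun u : ℝ ↦ √(u ^ 2 + 4 * a)
  have hchange : ∫ t in Ioi 0, f (t - a / t) = ∫ u, (1 + u / r u) / 2 * f u := by
    rw [← image_subDivInv_univ ha, integral_image_eq_integral_abs_deriv_smul MeasurableSet.univ
      (fun u _ ↦ (hasDerivAt_subDivInv ha u).hasDerivWithinAt)
      (strictMono_subDivInv ha).injective.injOn, setIntegral_univ]
    congr with u
    rw [abs_of_pos (half_pos (one_add_div_sqrt_pos ha u)), subDivInv_sub_div ha, smul_eq_mul]
  have hodd : ∫ u, u / r u * f u = 0 :=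
    integral_eq_zero_of_odd fun u ↦ by simp [r, heven, neg_div]
  have hbound (u : ℝ) : ‖u / r u‖ ≤ 1 := by
    rw [norm_div, norm_of_nonneg (sqrt_nonneg _), div_le_one (abs_nonneg u |>.trans_lt
      (abs_lt_sqrt_sq_add_four_mul ha u))]
    exact (abs_lt_sqrt_sq_add_four_mul ha u).le
  have hint : Integrable fun u ↦ u / r u * f u :=
    hf.bdd_mul (by fun_prop : Measurable fun u ↦ u / r u).aestronglyMeasurable
      (ae_of_all _ hbound)
  have hcomp_abs (u : ℝ) : f |u| = f u := by
    rcases abs_choice u with h | h <;> simp [h, heven]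
  calc ∫ t in Ioi 0, f (t - a / t)
      = (∫ u, f u) / 2 + (∫ u, u / r u * f u) / 2 := by
        rw [hchange, ← integral_div, ← integral_div,
          ← integral_add (hf.div_const 2) (hint.div_const 2)]
        congr with u
        ring
    _ = ∫ t in Ioi 0, f t := by
        have h := integral_comp_abs (f := f)
        simp only [hcomp_abs] at h
        rw [hodd, h]
        ring

theorem integral_Ioi_comp_mul_sub_div {f : ℝ → ℝ} (hf : Integrable f)
    (heven : ∀ u, f (-u) = f u) {c b : ℝ} (hc : 0 < c) (hb : 0 ≤ b) :
    ∫ t in Ioi 0, f (c * t - b / t) = c⁻¹ * ∫ t in Ioi 0, f t := by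
  have hscale (t : ℝ) : c * t - b / t = c * t - c * b / (c * t) := by
    rw [mul_div_mul_left _ _ hc.ne']
  simp_rw [hscale]
  rw [integral_comp_mul_left_Ioi (fun u ↦ f (u - c * b / u)) 0 hc, mul_zero,
    integral_Ioi_comp_sub_div hf heven (by positivity), smul_eq_mul]

theorem two_mul_gaussian_mul_exponential_sq {τ x t : ℝ} (ht : 0 < t) :
    2 * t * (1 / √(2 * π * t ^ 2) * exp (-x ^ 2 / (2 * t ^ 2)) *
        (τ ^ 2 / 2 * exp (-τ ^ 2 * t ^ 2 / 2))) =
      τ ^ 2 / √(2 * π) * exp (-τ * |x|) * exp (-(1 / 2) * (τ * t - |x| / t) ^ 2) := by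
  have hsquare : -x ^ 2 / (2 * t ^ 2) + -τ ^ 2 * t ^ 2 / 2 =
      -τ * |x| + -(1 / 2) * (τ * t - |x| / t) ^ 2 := by
    rw [← sq_abs x]
    field_simp
    ring
  have hexp : exp (-x ^ 2 / (2 * t ^ 2)) * exp (-τ ^ 2 * t ^ 2 / 2) =
      exp (-τ * |x|) * exp (-(1 / 2) * (τ * t - |x| / t) ^ 2) := by
    rw [← exp_add, ← exp_add, hsquare]
  rw [sqrt_mul (by positivity), sqrt_sq ht.le, mul_assoc _ (exp _) (exp _), ← hexp]
  field_simp

/-- Gaussian scale mixture identity for the Laplacian density: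
`∫₀^∞ (2πs)^{-1/2} exp(-x²/(2s)) · (τ²/2) exp(-τ²s/2) ds = (τ/2) exp(-τ|x|)`. -/
theorem laplacian_gauss_scale_mixture (τ x : ℝ) (hτ : 0 < τ) :
    ∫ s in Set.Ioi (0 : ℝ),
        (1 / Real.sqrt (2 * Real.pi * s)) * Real.exp (-x ^ 2 / (2 * s)) *
          (τ ^ 2 / 2 * Real.exp (-τ ^ 2 * s / 2)) =
      τ / 2 * Real.exp (-τ * |x|) := by
  have hgauss : Integrable fun u : ℝ ↦ exp (-(1 / 2) * u ^ 2) :=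
    integrable_exp_neg_mul_sq (by norm_num)
  rw [← integral_comp_rpow_Ioi_of_pos zero_lt_two]
  calc _ = ∫ t in Ioi 0, τ ^ 2 / √(2 * π) * exp (-τ * |x|) *
          exp (-(1 / 2) * (τ * t - |x| / t) ^ 2) := by
        refine setIntegral_congr_fun measurableSet_Ioi fun t ht ↦ ?_
        rw [show (2 : ℝ) - 1 = 1 by norm_num, rpow_one, rpow_two, smul_eq_mul]
        exact two_mul_gaussian_mul_exponential_sq ht
    _ = τ ^ 2 / √(2 * π) * exp (-τ * |x|) * (τ⁻¹ * (√(π / (1 / 2)) / 2)) := by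
        rw [integral_const_mul, integral_Ioi_comp_mul_sub_div hgauss (by simp) hτ (abs_nonneg x),
          integral_gaussian_Ioi]
    _ = τ / 2 * exp (-τ * |x|) := by
        rw [show π / (1 / 2) = 2 * π by ring]
        field_simp
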